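/- For each real p > 4, there exists ε ∈ (0,1) such that the H^p(T^2) norm of φ(z) = −ε z1 + (1 − ε^2) z2 is strictly greater than 1. In fact, ‖φ‖_{H^p(T^2)} = 1 + (p/4 − 1) ε^2 + O(ε^4) as ε → 0. -/

import Mathlib

/-
On the torus `|φ|² = 1 + a + b cos(θ₁ - θ₂)` with `a = ε⁴ - ε²` and `b = -2ε(1 - ε²)`, so the
`H^p` integral collapses to the circle mean of `(1 + a + b cos x)^(p/2)`. Expanding
`(1 + u)^q` to third order (remainder `O(u⁴)`, with `u = O(ε)`) and averaging, the odd powers of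
`cos` drop out and the mean is `1 + (q² - 2q) ε² + O(ε⁴)` with `q = p/2`; taking the `1/p`-th
power gives `1 + (p/4 - 1) ε² + O(ε⁴)`, whose `ε²` coefficient is positive when `p > 4`.
-/

open scoped Real

/-- The `H^p(𝕋²)` norm of `φ(z) = -ε z₁ + (1-ε²) z₂`. -/
noncomputable def hpnorm (p ε : ℝ) : ℝ :=
  ((1 / (2 * π) ^ 2) * ∫ θ₁ in (0:ℝ)..(2 * π), ∫ θ₂ in (0:ℝ)..(2 * π),
      ‖-(ε : ℂ) * Complex.exp (Complex.I * θ₁)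
        + (1 - (ε : ℂ) ^ 2) * Complex.exp (Complex.I * θ₂)‖ ^ p) ^ (1/p)

open Set Finset Nat Asymptotics Filter Topology

lemma norm_mul_exp_add_mul_exp_sq (a b θ₁ θ₂ : ℝ) :
    ‖(a : ℂ) * Complex.exp (Complex.I * θ₁) + (b : ℂ) * Complex.exp (Complex.I * θ₂)‖ ^ 2
      = a ^ 2 + b ^ 2 + 2 * a * b * Real.cos (θ₁ - θ₂) := by
  rw [Complex.sq_norm, Complex.normSq_apply, mul_comm Complex.I, mul_comm Complex.I,
    Complex.exp_mul_I, Complex.exp_mul_I]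
  simp only [← Complex.ofReal_cos, ← Complex.ofReal_sin, Complex.add_re, Complex.add_im,
    Complex.mul_re, Complex.mul_im, Complex.ofReal_re, Complex.ofReal_im, Complex.I_re,
    Complex.I_im, Real.cos_sub]
  linear_combination a ^ 2 * Real.sin_sq_add_cos_sq θ₁ + b ^ 2 * Real.sin_sq_add_cos_sq θ₂

lemma Function.Periodic.integral_integral_comp_sub {f : ℝ → ℝ} {T : ℝ}
    (hf : Function.Periodic f T) :
    ∫ θ₁ in (0:ℝ)..T, ∫ θ₂ in (0:ℝ)..T, f (θ₁ - θ₂) = T * ∫ x in (0:ℝ)..T, f x := by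
  have hinner (θ : ℝ) : ∫ θ₂ in (0:ℝ)..T, f (θ - θ₂) = ∫ x in (0:ℝ)..T, f x := by
    simpa using hf.intervalIntegral_add_eq (θ - T) 0
  simp [hinner]

noncomputable def circleMean (f : ℝ → ℝ) : ℝ := (2 * π)⁻¹ * ∫ x in (0:ℝ)..2 * π, f x

lemma hpnorm_eq (p ε : ℝ) :
    hpnorm p ε = circleMean (fun x =>
      (1 + ((ε ^ 4 - ε ^ 2) + -(2 * ε * (1 - ε ^ 2)) * Real.cos x)) ^ (p / 2)) ^ (1 / p) := by
  have hperiodic : Function.Periodic (fun x => (1 + ((ε ^ 4 - ε ^ 2)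
      + -(2 * ε * (1 - ε ^ 2)) * Real.cos x)) ^ (p / 2)) (2 * π) := by
    intro x
    simp [Real.cos_add_two_pi]
  have hintegrand (θ₁ θ₂ : ℝ) : ‖-(ε : ℂ) * Complex.exp (Complex.I * θ₁)
      + (1 - (ε : ℂ) ^ 2) * Complex.exp (Complex.I * θ₂)‖ ^ p
      = (1 + ((ε ^ 4 - ε ^ 2) + -(2 * ε * (1 - ε ^ 2)) * Real.cos (θ₁ - θ₂))) ^ (p / 2) := by
    have h := norm_mul_exp_add_mul_exp_sq (-ε) (1 - ε ^ 2) θ₁ θ₂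
    push_cast at h
    rw [show 1 + ((ε ^ 4 - ε ^ 2) + -(2 * ε * (1 - ε ^ 2)) * Real.cos (θ₁ - θ₂))
      = (-ε) ^ 2 + (1 - ε ^ 2) ^ 2 + 2 * -ε * (1 - ε ^ 2) * Real.cos (θ₁ - θ₂) by ring,
      ← h, Real.rpow_div_two_eq_sqrt _ (by positivity), Real.sqrt_sq (norm_nonneg _)]
  simp_rw [hpnorm, circleMean, hintegrand, hperiodic.integral_integral_comp_sub]
  congr 1
  field_simp

lemma abs_le_mul_abs_pow_succ_of_hasDerivAt {g g' : ℝ → ℝ} {K t : ℝ} {n : ℕ} (hK : 0 ≤ K)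
    (hg : g 0 = 0) (hd : ∀ x ∈ uIcc 0 t, HasDerivAt g (g' x) x)
    (hb : ∀ x ∈ uIcc 0 t, |g' x| ≤ K * |x| ^ n) :
    |g t| ≤ K * |t| ^ (n + 1) := by
  have hmvt : ‖g t - g 0‖ ≤ K * |t| ^ n * ‖t - 0‖ := by
    refine (convex_uIcc 0 t).norm_image_sub_le_of_norm_hasDerivWithin_le
      (fun x hx => (hd x hx).hasDerivWithinAt) (fun x hx => ?_) left_mem_uIcc right_mem_uIcc
    have hxt : |x| ≤ |t| := by simpa using abs_sub_left_of_mem_uIcc hx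
    exact (hb x hx).trans (by gcongr)
  simpa [hg, pow_succ, mul_assoc] using hmvt

lemma rpow_le_two_rpow_abs {x : ℝ} (q : ℝ) (h₁ : 1 / 2 ≤ x) (h₂ : x ≤ 2) :
    x ^ q ≤ 2 ^ |q| := by
  rcases le_total 0 q with hq | hq
  · rw [abs_of_nonneg hq]
    exact Real.rpow_le_rpow (by linarith) h₂ hq
  · rw [abs_of_nonpos hq, Real.rpow_neg zero_le_two, ← Real.inv_rpow zero_le_two]
    exact Real.rpow_le_rpow_of_nonpos (by norm_num) (by linarith) hq

noncomputable def binomialTaylor (q : ℝ) (n : ℕ) (t : ℝ) : ℝ :=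
  ∑ k ∈ range n, (∏ i ∈ range k, (q - i)) / k ! * t ^ k

@[fun_prop]
lemma continuous_binomialTaylor (q : ℝ) (n : ℕ) : Continuous (binomialTaylor q n) := by
  unfold binomialTaylor
  fun_prop

lemma binomialTaylor_succ_zero (q : ℝ) (n : ℕ) : binomialTaylor q (n + 1) 0 = 1 := by
  simp [binomialTaylor, sum_range_succ']

lemma hasDerivAt_binomialTaylor_succ (q : ℝ) (n : ℕ) (t : ℝ) :
    HasDerivAt (binomialTaylor q (n + 1)) (q * binomialTaylor (q - 1) n t) t := by
  have hterm : ∀ k ∈ range n, HasDerivAt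
      (fun s => (∏ i ∈ range (k + 1), (q - i)) / (k + 1)! * s ^ (k + 1))
      (q * ((∏ i ∈ range k, (q - 1 - i)) / k ! * t ^ k)) t := by
    intro k _
    refine ((hasDerivAt_pow (k + 1) t).const_mul _).congr_deriv ?_
    rw [prod_range_succ', Nat.factorial_succ]
    push_cast
    simp_rw [sub_add_eq_sub_sub, sub_right_comm q _ (1:ℝ), sub_zero]
    field_simp
  have hsum := (HasDerivAt.fun_sum hterm).const_add 1
  have hT : binomialTaylor q (n + 1) = fun s =>
      1 + ∑ k ∈ range n, (∏ i ∈ range (k + 1), (q - i)) / (k + 1)! * s ^ (k + 1) := by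
    ext s
    simp [binomialTaylor, sum_range_succ', add_comm]
  rwa [hT, binomialTaylor, mul_sum]

lemma abs_one_add_rpow_sub_binomialTaylor_le (n : ℕ) (q : ℝ) {t : ℝ} (ht : |t| ≤ 1 / 2) :
    |(1 + t) ^ q - binomialTaylor q n t| ≤ (∏ i ∈ range n, |q - i|) * 2 ^ |q - n| * |t| ^ n := by
  induction n generalizing q t with
  | zero =>
    obtain ⟨h₁, h₂⟩ := abs_le.1 ht
    have hpos : 0 ≤ (1 + t) ^ q := Real.rpow_nonneg (by linarith) q
    simpa [binomialTaylor, abs_of_nonneg hpos] using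
      rpow_le_two_rpow_abs q (by linarith) (by linarith)
  | succ n ih =>
    -- the order-`(n + 1)` remainder for `q` has derivative `q` times the order-`n` one for `q - 1`
    have hK : 0 ≤ |q| * ((∏ i ∈ range n, |q - 1 - i|) * 2 ^ |q - 1 - n|) := by positivity
    have hmvt := abs_le_mul_abs_pow_succ_of_hasDerivAt (t := t) (n := n) hK
      (g := fun s => (1 + s) ^ q - binomialTaylor q (n + 1) s)
      (g' := fun s => q * ((1 + s) ^ (q - 1) - binomialTaylor (q - 1) n s))
      (by simp [binomialTaylor_succ_zero]) ?_ ?_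
    · convert hmvt using 2
      rw [prod_range_succ']
      push_cast
      simp_rw [sub_add_eq_sub_sub, sub_right_comm q _ (1:ℝ), sub_zero]
      ring
    · intro x hx
      have hxt : |x| ≤ |t| := by simpa using abs_sub_left_of_mem_uIcc hx
      have hx1 : 0 < 1 + x := by linarith [(abs_le.1 (hxt.trans ht)).1]
      have h := ((Real.hasDerivAt_rpow_const (p := q) (Or.inl hx1.ne')).comp x
        ((hasDerivAt_id x).const_add 1)).sub (hasDerivAt_binomialTaylor_succ q n x)
      exact h.congr_deriv (by ring)
    · intro x hx
      have hxt : |x| ≤ |t| := by simpa using abs_sub_left_of_mem_uIcc hx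
      rw [abs_mul, mul_assoc]
      gcongr
      exact ih (q - 1) (hxt.trans ht)

lemma binomialTaylor_four (q t : ℝ) :
    binomialTaylor q 4 t
      = 1 + q * t + q * (q - 1) / 2 * t ^ 2 + q * (q - 1) * (q - 2) / 6 * t ^ 3 := by
  simp [binomialTaylor, sum_range_succ, prod_range_succ, factorial]

lemma binomialTaylor_two (q t : ℝ) : binomialTaylor q 2 t = 1 + q * t := by
  simp [binomialTaylor, sum_range_succ]

lemma circleMean_binomialTaylor_four (q a b : ℝ) :
    circleMean (fun x => binomialTaylor q 4 (a + b * Real.cos x))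
      = 1 + q * a + q * (q - 1) / 2 * (a ^ 2 + b ^ 2 / 2)
        + q * (q - 1) * (q - 2) / 6 * (a ^ 3 + 3 * a * b ^ 2 / 2) := by
  set c₀ := 1 + q * a + q * (q - 1) / 2 * a ^ 2 + q * (q - 1) * (q - 2) / 6 * a ^ 3
  set c₁ := q * b + q * (q - 1) * a * b + q * (q - 1) * (q - 2) / 2 * a ^ 2 * b
  set c₂ := q * (q - 1) / 2 * b ^ 2 + q * (q - 1) * (q - 2) / 2 * a * b ^ 2
  set c₃ := q * (q - 1) * (q - 2) / 6 * b ^ 3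
  have hexpand (x : ℝ) : binomialTaylor q 4 (a + b * Real.cos x)
      = c₀ + c₁ * Real.cos x + c₂ * Real.cos x ^ 2 + c₃ * Real.cos x ^ 3 := by
    rw [binomialTaylor_four]
    ring
  simp_rw [circleMean, hexpand]
  rw [intervalIntegral.integral_add, intervalIntegral.integral_add, intervalIntegral.integral_add]
  · simp [integral_cos, integral_cos_sq, integral_cos_pow_three]
    field_simp
    ring
  all_goals exact Continuous.intervalIntegrable (by fun_prop) _ _

lemma abs_add_mul_cos_le (a b x : ℝ) : |a + b * Real.cos x| ≤ |a| + |b| := by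
  calc |a + b * Real.cos x| ≤ |a| + |b| * |Real.cos x| := by rw [← abs_mul]; exact abs_add_le _ _
    _ ≤ |a| + |b| := by gcongr; exact mul_le_of_le_one_right (abs_nonneg b) (Real.abs_cos_le_one x)

lemma abs_circleMean_one_add_rpow_sub_le (q : ℝ) {a b : ℝ} (hab : |a| + |b| ≤ 1 / 2) :
    |circleMean (fun x => (1 + (a + b * Real.cos x)) ^ q)
        - (1 + q * a + q * (q - 1) / 2 * (a ^ 2 + b ^ 2 / 2)
          + q * (q - 1) * (q - 2) / 6 * (a ^ 3 + 3 * a * b ^ 2 / 2))|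
      ≤ (∏ i ∈ range 4, |q - i|) * 2 ^ |q - 4| * (|a| + |b|) ^ 4 := by
  set K := (∏ i ∈ range 4, |q - i|) * 2 ^ |q - 4|
  have hsmall (x : ℝ) : |a + b * Real.cos x| ≤ 1 / 2 := (abs_add_mul_cos_le a b x).trans hab
  have hpointwise (x : ℝ) :
      ‖(1 + (a + b * Real.cos x)) ^ q - binomialTaylor q 4 (a + b * Real.cos x)‖
        ≤ K * (|a| + |b|) ^ 4 := by
    have h := abs_one_add_rpow_sub_binomialTaylor_le 4 q (hsmall x)
    rw [Nat.cast_ofNat] at h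
    refine h.trans ?_
    gcongr
    exact abs_add_mul_cos_le a b x
  have hcont : Continuous fun x => (1 + (a + b * Real.cos x)) ^ q := by
    refine Continuous.rpow_const (by fun_prop) fun x => Or.inl ?_
    linarith [(abs_le.1 (hsmall x)).1]
  rw [← circleMean_binomialTaylor_four, circleMean, circleMean, ← mul_sub,
    ← intervalIntegral.integral_sub (hcont.intervalIntegrable _ _)
      (Continuous.intervalIntegrable (by fun_prop) _ _),
    abs_mul, abs_of_pos (by positivity : (0:ℝ) < (2 * π)⁻¹)]
  have hintegral := intervalIntegral.norm_integral_le_of_norm_le_const (a := 0) (b := 2 * π)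
    fun x _ => hpointwise x
  rw [Real.norm_eq_abs, sub_zero, abs_of_pos Real.two_pi_pos] at hintegral
  calc (2 * π)⁻¹ * |∫ x in (0:ℝ)..2 * π, _|
      ≤ (2 * π)⁻¹ * (K * (|a| + |b|) ^ 4 * (2 * π)) := by gcongr
    _ = K * (|a| + |b|) ^ 4 := by field_simp

lemma isBigO_pow_mul_of_continuousAt {g : ℝ → ℝ} (hg : ContinuousAt g 0) (n : ℕ) :
    (fun x => x ^ n * g x) =O[𝓝 0] fun x => x ^ n := by
  simpa using (isBigO_refl (fun x : ℝ => x ^ n) _).mul (hg.tendsto.isBigO_one ℝ)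

lemma circleMean_one_add_rpow_sub_isBigO (q : ℝ) {a b : ℝ → ℝ}
    (ha : a =O[𝓝 0] fun ε => ε) (hb : b =O[𝓝 0] fun ε => ε) :
    (fun ε => circleMean (fun x => (1 + (a ε + b ε * Real.cos x)) ^ q)
        - (1 + q * a ε + q * (q - 1) / 2 * (a ε ^ 2 + b ε ^ 2 / 2)
          + q * (q - 1) * (q - 2) / 6 * (a ε ^ 3 + 3 * a ε * b ε ^ 2 / 2)))
      =O[𝓝 0] fun ε => ε ^ 4 := by
  have hs : (fun ε => |a ε| + |b ε|) =O[𝓝 0] fun ε => ε := ha.abs_left.add hb.abs_left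
  have hs_small : ∀ᶠ ε in 𝓝 0, |a ε| + |b ε| ≤ 1 / 2 :=
    (hs.trans_tendsto tendsto_id).eventually (ge_mem_nhds (by norm_num))
  refine IsBigO.trans (IsBigO.of_bound ((∏ i ∈ range 4, |q - i|) * 2 ^ |q - 4|)
    (hs_small.mono fun ε hε => ?_)) (hs.pow 4)
  rw [Real.norm_eq_abs, Real.norm_of_nonneg (by positivity)]
  exact abs_circleMean_one_add_rpow_sub_le q hε

lemma circleMean_hpnorm_integrand_sub_isBigO (q : ℝ) :
    (fun ε : ℝ => circleMean (fun x =>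
        (1 + ((ε ^ 4 - ε ^ 2) + -(2 * ε * (1 - ε ^ 2)) * Real.cos x)) ^ q)
      - (1 + (q ^ 2 - 2 * q) * ε ^ 2)) =O[𝓝 0] fun ε => ε ^ 4 := by
  have ha : (fun ε : ℝ => ε ^ 4 - ε ^ 2) =O[𝓝 0] fun ε => ε :=
    (isBigO_pow_mul_of_continuousAt (g := fun ε => ε ^ 3 - ε) (by fun_prop) 1).congr
      (fun ε => by ring) (fun ε => pow_one ε)
  have hb : (fun ε : ℝ => -(2 * ε * (1 - ε ^ 2))) =O[𝓝 0] fun ε => ε :=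
    (isBigO_pow_mul_of_continuousAt (g := fun ε => -(2 * (1 - ε ^ 2))) (by fun_prop) 1).congr
      (fun ε => by ring) (fun ε => pow_one ε)
  have hmean := circleMean_one_add_rpow_sub_isBigO q ha hb
  -- the polynomial part minus `1 + (q² - 2q) ε²`, divided by `ε⁴`: its `ε²` terms cancel
  have hpoly := isBigO_pow_mul_of_continuousAt (n := 4)
    (g := fun ε => q + q * (q - 1) * (ε ^ 2 - 2) + q * (q - 1) / 2 * (1 - ε ^ 2) ^ 2
      - q * (q - 1) * (q - 2) * (ε ^ 2 + 6) * (1 - ε ^ 2) ^ 3 / 6) (by fun_prop)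
  refine (hmean.add hpoly).congr_left fun ε => ?_
  ring

lemma one_add_rpow_sub_isBigO (r : ℝ) :
    (fun w : ℝ => (1 + w) ^ r - (1 + r * w)) =O[𝓝 0] fun w => w ^ 2 := by
  have hsmall : ∀ᶠ w : ℝ in 𝓝 0, |w| ≤ 1 / 2 :=
    (continuous_abs.tendsto' 0 0 abs_zero).eventually (ge_mem_nhds (by norm_num))
  refine IsBigO.of_bound ((∏ i ∈ range 2, |r - i|) * 2 ^ |r - 2|) (hsmall.mono fun w hw => ?_)
  have h := abs_one_add_rpow_sub_binomialTaylor_le 2 r hw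
  rw [binomialTaylor_two, Nat.cast_ofNat] at h
  rwa [Real.norm_eq_abs, norm_pow, Real.norm_eq_abs]

lemma hpnorm_sub_isBigO {p : ℝ} (hp : p ≠ 0) :
    (fun ε => hpnorm p ε - (1 + (p / 4 - 1) * ε ^ 2)) =O[𝓝 0] fun ε => ε ^ 4 := by
  set w : ℝ → ℝ := fun ε => circleMean (fun x =>
    (1 + ((ε ^ 4 - ε ^ 2) + -(2 * ε * (1 - ε ^ 2)) * Real.cos x)) ^ (p / 2)) - 1
  have hw_sub : (fun ε => w ε - ((p / 2) ^ 2 - 2 * (p / 2)) * ε ^ 2) =O[𝓝 0] fun ε => ε ^ 4 :=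
    (circleMean_hpnorm_integrand_sub_isBigO (p / 2)).congr_left fun ε => by ring
  have h42 : (fun ε : ℝ => ε ^ 4) =O[𝓝 0] fun ε => ε ^ 2 :=
    (isLittleO_pow_pow (by norm_num)).isBigO
  have hw : w =O[𝓝 0] fun ε => ε ^ 2 :=
    ((hw_sub.trans h42).add ((isBigO_refl _ _).const_mul_left ((p / 2) ^ 2 - 2 * (p / 2))))
      |>.congr_left fun ε => by ring
  have hw_tendsto : Tendsto w (𝓝 0) (𝓝 0) :=
    hw.trans_tendsto ((continuous_pow 2).tendsto' 0 0 (zero_pow two_ne_zero))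
  have hw_sq : (fun ε => w ε ^ 2) =O[𝓝 0] fun ε => ε ^ 4 :=
    (hw.pow 2).congr_right fun ε => by ring
  have htaylor := ((one_add_rpow_sub_isBigO (1 / p)).comp_tendsto hw_tendsto).trans hw_sq
  refine (htaylor.add (hw_sub.const_mul_left (1 / p))).congr_left fun ε => ?_
  have hcoeff : p / 4 - 1 = 1 / p * ((p / 2) ^ 2 - 2 * (p / 2)) := by field_simp; ring
  simp only [Function.comp, w, hpnorm_eq, hcoeff, add_sub_cancel]
  ring

lemma eventually_one_lt_hpnorm {p : ℝ} (hp : 4 < p) : ∀ᶠ ε in 𝓝[>] 0, 1 < hpnorm p ε := by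
  have hc : 0 < p / 4 - 1 := by linarith
  have ho := (hpnorm_sub_isBigO (by linarith : p ≠ 0)).trans_isLittleO
    (isLittleO_pow_pow (by norm_num : 2 < 4))
  filter_upwards [nhdsWithin_le_nhds (ho.def (half_pos hc)), self_mem_nhdsWithin] with ε hε hε0
  have hε2 : 0 < ε ^ 2 := pow_pos hε0 2
  rw [Real.norm_eq_abs, Real.norm_eq_abs, abs_of_pos hε2] at hε
  nlinarith [(abs_le.1 hε).1]

theorem stmt17 (p : ℝ) (hp : 4 < p) :
    (∃ ε : ℝ, 0 < ε ∧ ε < 1 ∧ 1 < hpnorm p ε) ∧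
    ∃ C δ : ℝ, 0 < C ∧ 0 < δ ∧ ∀ ε : ℝ, 0 < ε → ε < δ →
      |hpnorm p ε - (1 + (p/4 - 1) * ε ^ 2)| ≤ C * ε ^ 4 := by
  obtain ⟨C, hC, hbound⟩ := (hpnorm_sub_isBigO (by linarith : p ≠ 0)).exists_pos
  obtain ⟨δ, hδ, hδbound⟩ := Metric.eventually_nhds_iff.1 hbound.bound
  refine ⟨?_, C, δ, hC, hδ, fun ε hε hεδ => ?_⟩
  · obtain ⟨ε, hgt, hε⟩ := ((eventually_one_lt_hpnorm hp).and (Ioo_mem_nhdsGT one_pos)).exists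
    exact ⟨ε, hε.1, hε.2, hgt⟩
  · have h := hδbound (show dist ε 0 < δ by rwa [Real.dist_0_eq_abs, abs_of_pos hε])
    rwa [Real.norm_eq_abs, Real.norm_eq_abs, abs_of_pos (pow_pos hε 4)] at h
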